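/- Let k ≥ 5. Suppose G has maximum degree at most k and contains a cycle v₁v₂…v₄ℓ such that d(vᵢ) ≤ k when 4 divides i and d(vᵢ) = 2 otherwise. If the square of the graph obtained from G by deleting all the degree-2 vertices of this cycle is (k+1)-choosable, then G² is (k+1)-choosable. -/

import Mathlib

open SimpleGraph

/-- The square of a graph: vertices adjacent iff at distance at most 2. -/
def SimpleGraph.square {V : Type*} (G : SimpleGraph V) : SimpleGraph V where
  Adj u v := u ≠ v ∧ (G.Adj u v ∨ ∃ w, G.Adj u w ∧ G.Adj w v)
  symm := ⟨by
    rintro u v ⟨h, h2 | ⟨w, hw1, hw2⟩⟩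
    · exact ⟨h.symm, Or.inl h2.symm⟩
    · exact ⟨h.symm, Or.inr ⟨w, hw2.symm, hw1.symm⟩⟩⟩
  loopless := ⟨fun v h => h.1 rfl⟩

/-- A graph is `k`-choosable if from every assignment of lists of size at least `k`
there is a proper coloring. -/
def SimpleGraph.Choosable {V : Type*} (G : SimpleGraph V) (k : ℕ) : Prop :=
  ∀ L : V → Finset ℕ, (∀ v, k ≤ (L v).card) →
    ∃ c : V → ℕ, (∀ v, c v ∈ L v) ∧ ∀ ⦃u v⦄, G.Adj u v → c u ≠ c v

/-- `G.MadLT x` means the maximum average degree of `G` is less than `x`: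
every nonempty subgraph `H` satisfies `2|E(H)|/|V(H)| < x`. -/
def SimpleGraph.MadLT {V : Type*} (G : SimpleGraph V) (x : ℝ) : Prop :=
  ∀ H : G.Subgraph, H.verts.Nonempty →
    2 * (H.edgeSet.ncard : ℝ) / (H.verts.ncard : ℝ) < x

/-!
Colour the square of the graph left after deleting the degree-two vertices `v_i` (`4 ∤ i`) of the
cycle, then put them back in two rounds. A vertex `v_i` with `i` odd has a hub `v_{4j}` as one
neighbour and a deleted vertex as the other, so the coloured vertices within distance two of it lie
in the closed neighbourhood of the hub; that has at most `k + 1` vertices, two of which (`v_i` and the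
other odd vertex next to the hub) are uncoloured, so at least two colours of its list survive. In
`G²` the odd vertices form a cycle of length `2ℓ`, and even cycles are 2-choosable. Finally the
vertices `v_i` with `i ≡ 2 (mod 4)` are pairwise non-adjacent in `G²` and have only four neighbours
there, so they can be coloured greedily from lists of size `k + 1 > 4`.
-/

open Function

theorem ZMod.val_add_one_eq_or {n : ℕ} [NeZero n] (t : ZMod n) :
    (t + 1).val = t.val + 1 ∨ (t + 1).val = 0 ∧ t.val + 1 = n := by
  have ht : t + 1 = ((t.val + 1 : ℕ) : ZMod n) := by simp
  rcases Nat.lt_or_ge (t.val + 1) n with h | h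
  · exact Or.inl (by rw [ht, ZMod.val_cast_of_lt h])
  · have h' : t.val + 1 = n := le_antisymm (ZMod.val_lt t) h
    exact Or.inr ⟨by rw [ht, h', ZMod.natCast_self, ZMod.val_zero], h'⟩

theorem Set.ncard_add_one_le_of_subset_insert_inter {α : Type*} {s S T : Set α} {h y z : α}
    (hs : s.Finite) (hT : T ⊆ insert h s ∩ S) (hy : y ∈ s) (hz : z ∈ s) (hyz : y ≠ z)
    (hyS : y ∉ S) (hzS : z ∉ S) : T.ncard + 1 ≤ s.ncard := by
  have hsub : T ⊆ insert h (s \ {y, z}) := by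
    rintro x hx
    obtain ⟨rfl | hxs, hxS⟩ := hT hx
    · exact Set.mem_insert _ _
    · refine Set.mem_insert_of_mem _ ⟨hxs, ?_⟩
      rintro (rfl | rfl) <;> contradiction
  have hpair : ({y, z} : Set α) ⊆ s := Set.pair_subset hy hz
  have h1 := Set.ncard_le_ncard hsub ((hs.sdiff).insert h)
  have h2 := Set.ncard_insert_le h (s \ {y, z})
  have h3 := Set.ncard_sdiff_add_ncard_of_subset hpair hs
  rw [Set.ncard_pair hyz] at h3
  omega

theorem exists_path_listColoring (L : ℕ → Finset ℕ) (hL : ∀ t, 1 < (L t).card) (a : ℕ) :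
    ∃ f : ℕ → ℕ, f 0 = a ∧ ∀ t, f (t + 1) ∈ L t ∧ f (t + 1) ≠ f t := by
  choose g hg using fun t x => Finset.exists_mem_ne (hL t) x
  exact ⟨fun t => Nat.rec a g t, rfl, fun t => hg t _⟩

theorem exists_cycle_listColoring_of_alternating {n : ℕ} [NeZero n] {p : ZMod n → Prop}
    (hp : ∀ i, p (i + 1) ↔ ¬ p i) (L : ZMod n → Finset ℕ) (hL : ∀ i, 2 ≤ (L i).card) :
    ∃ c : ZMod n → ℕ, (∀ i, c i ∈ L i) ∧ ∀ i, c i ≠ c (i + 1) := by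
  classical
  by_cases hsub : ∀ i, L (i + 1) ⊆ L i
  · have hmono : ∀ (t : ℕ) i, L (i + t) ⊆ L i := by
      intro t
      induction t with
      | zero => simp
      | succ t ih => intro i; rw [Nat.cast_succ, ← add_assoc]; exact (hsub _).trans (ih i)
    have h0 : ∀ i, L 0 ⊆ L i := fun i => by simpa using hmono (-i).val i
    obtain ⟨a, ha, b, hb, hab⟩ := Finset.one_lt_card.1 (hL 0)
    refine ⟨fun i => if p i then a else b, fun i => ?_, fun i => ?_⟩
    · dsimp only
      split_ifs
      exacts [h0 i ha, h0 i hb]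
    · by_cases h : p i <;> simp [h, hp, hab, Ne.symm hab]
  · -- start just after a vertex `i₀` whose list misses a colour `a` of the next list, and colour
    -- greedily all the way round: the last vertex `i₀` need not avoid `a`.
    push Not at hsub
    obtain ⟨i₀, hi₀⟩ := hsub
    obtain ⟨a, haL, ha⟩ := Finset.not_subset.1 hi₀
    obtain ⟨f, hf0, hf⟩ :=
      exists_path_listColoring (fun t => L (i₀ + 1 + (t + 1 : ℕ))) (fun t => hL _) a
    have hfL : ∀ t : ℕ, f t ∈ L (i₀ + 1 + t) := by
      rintro (_ | t)
      · simpa [hf0] using haL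
      · exact (hf t).1
    refine ⟨fun i => f (i - (i₀ + 1)).val, fun i => by simpa using hfL (i - (i₀ + 1)).val,
      fun i => ?_⟩
    dsimp only
    rw [show i + 1 - (i₀ + 1) = i - (i₀ + 1) + 1 by ring]
    rcases ZMod.val_add_one_eq_or (i - (i₀ + 1)) with h | ⟨h, -⟩
    · rw [h]
      exact (hf _).2.symm
    · obtain rfl : i = i₀ := by
        have := (ZMod.val_eq_zero _).1 h
        linear_combination this
      have hi : f (i - (i + 1)).val ∈ L i := by simpa using hfL (i - (i + 1)).val
      rw [h, hf0]
      exact fun e => ha (e ▸ hi)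

namespace SimpleGraph

variable {V : Type*}

def IsListColoringOn (H : SimpleGraph V) (L : V → Finset ℕ) (A : Set V) (c : V → ℕ) : Prop :=
  (∀ x ∈ A, c x ∈ L x) ∧ ∀ x ∈ A, ∀ y ∈ A, H.Adj x y → c x ≠ c y

noncomputable def freeColors [Finite V] (H : SimpleGraph V) (L : V → Finset ℕ) (A : Set V)
    (c : V → ℕ) (x : V) : Finset ℕ :=
  L x \ (Set.toFinite (c '' (H.neighborSet x ∩ A))).toFinset

section ListColoring

variable [Finite V] {H : SimpleGraph V} {L : V → Finset ℕ} {A B : Set V} {c d : V → ℕ}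

theorem mem_freeColors {x : V} {i : ℕ} :
    i ∈ H.freeColors L A c x ↔ i ∈ L x ∧ ∀ y ∈ A, H.Adj x y → c y ≠ i := by
  simp only [freeColors, Finset.mem_sdiff, Set.Finite.mem_toFinset, Set.mem_image,
    Set.mem_inter_iff, mem_neighborSet]
  grind

theorem card_le_card_freeColors_add (x : V) :
    (L x).card ≤ (H.freeColors L A c x).card + (H.neighborSet x ∩ A).ncard := by
  have hsdiff := Finset.le_card_sdiff (Set.toFinite (c '' (H.neighborSet x ∩ A))).toFinset (L x)
  have himage : (c '' (H.neighborSet x ∩ A)).ncard ≤ (H.neighborSet x ∩ A).ncard :=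
    Set.ncard_image_le (Set.toFinite _)
  rw [Set.ncard_eq_toFinset_card _ (Set.toFinite _)] at himage
  rw [freeColors]
  omega

theorem IsListColoringOn.piecewise [DecidablePred (· ∈ B)] (hc : H.IsListColoringOn L A c)
    (hd : H.IsListColoringOn (H.freeColors L A c) B d) :
    H.IsListColoringOn L (A ∪ B) (B.piecewise d c) := by
  have hdL : ∀ x ∈ B, d x ∈ L x := fun x hx => (mem_freeColors.1 (hd.1 x hx)).1
  have hdc : ∀ x ∈ B, ∀ y ∈ A, H.Adj x y → d x ≠ c y := fun x hx y hy hxy =>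
    ((mem_freeColors.1 (hd.1 x hx)).2 y hy hxy).symm
  refine ⟨fun x hx => ?_, fun x hx y hy hxy => ?_⟩
  · by_cases hxB : x ∈ B
    · simpa [hxB] using hdL x hxB
    · simpa [hxB] using hc.1 x (hx.resolve_right hxB)
  · by_cases hxB : x ∈ B <;> by_cases hyB : y ∈ B <;> simp only [Set.piecewise_eq_of_mem,
      Set.piecewise_eq_of_notMem, hxB, hyB, not_false_eq_true]
    · exact hd.2 x hxB y hyB hxy
    · exact hdc x hxB y (hy.resolve_right hyB) hxy
    · exact (hdc y hyB x (hx.resolve_right hxB) hxy.symm).symm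
    · exact hc.2 x (hx.resolve_right hxB) y (hy.resolve_right hyB) hxy

theorem IsListColoringOn.exists_extend_of_independent (hc : H.IsListColoringOn L A c)
    (hB : ∀ x ∈ B, ∀ y ∈ B, ¬ H.Adj x y)
    (hcard : ∀ x ∈ B, (H.neighborSet x ∩ A).ncard < (L x).card) :
    ∃ c', H.IsListColoringOn L (A ∪ B) c' := by
  have hfree : ∀ x, ∃ i, x ∈ B → i ∈ H.freeColors L A c x := by
    intro x
    by_cases hx : x ∈ B
    · obtain ⟨i, hi⟩ : (H.freeColors L A c x).Nonempty := by
        rw [← Finset.card_pos]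
        have := card_le_card_freeColors_add (H := H) (L := L) (A := A) (c := c) x
        have := hcard x hx
        omega
      exact ⟨i, fun _ => hi⟩
    · exact ⟨0, fun h => absurd h hx⟩
  choose d hd using hfree
  classical
  exact ⟨_, hc.piecewise ⟨hd, fun x hx y hy hxy => absurd hxy (hB x hx y hy)⟩⟩

theorem IsListColoringOn.exists_extend_of_cycle {n : ℕ} [NeZero n] (hc : H.IsListColoringOn L A c)
    {p : ZMod n → Prop} (hp : ∀ i, p (i + 1) ↔ ¬ p i) {u : ZMod n → V} (hu : Injective u)
    (hadj : ∀ s t, H.Adj (u s) (u t) → t = s + 1 ∨ s = t + 1)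
    (hcard : ∀ t, (H.neighborSet (u t) ∩ A).ncard + 2 ≤ (L (u t)).card) :
    ∃ c', H.IsListColoringOn L (A ∪ Set.range u) c' := by
  obtain ⟨e, heL, he⟩ := exists_cycle_listColoring_of_alternating hp
    (fun t => H.freeColors L A c (u t))
    fun t => by
      have := card_le_card_freeColors_add (H := H) (L := L) (A := A) (c := c) (u t)
      have := hcard t
      omega
  classical
  refine ⟨_, hc.piecewise (d := extend u e 0) ⟨?_, ?_⟩⟩
  · rintro _ ⟨t, rfl⟩
    simpa [hu.extend_apply] using heL t
  · rintro _ ⟨s, rfl⟩ _ ⟨t, rfl⟩ hst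
    rw [hu.extend_apply, hu.extend_apply]
    rcases hadj s t hst with rfl | rfl
    exacts [he s, (he t).symm]

end ListColoring

section Square

variable {G : SimpleGraph V}

theorem neighborSet_eq_pair {x p q : V} (hp : G.Adj x p) (hq : G.Adj x q) (hpq : p ≠ q)
    (h : (G.neighborSet x).ncard = 2) : G.neighborSet x = {p, q} :=
  (Set.eq_of_subset_of_ncard_le (t := G.neighborSet x) (Set.pair_subset hp hq)
    (by rw [h, Set.ncard_pair hpq]) (Set.finite_of_ncard_ne_zero (by omega))).symm

theorem square_neighborSet_subset {x p q p' q' : V} (hx : G.neighborSet x = {p, q})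
    (hp : G.neighborSet p = {x, p'}) (hq : G.neighborSet q = {x, q'}) :
    G.square.neighborSet x ⊆ {p, q, p', q'} := by
  rintro y ⟨hne, hxy | ⟨z, hxz, hzy⟩⟩
  · rw [← mem_neighborSet, hx] at hxy
    rcases hxy with rfl | rfl <;> simp
  · rw [← mem_neighborSet, hx] at hxz
    rcases hxz with rfl | rfl
    · rw [← mem_neighborSet, hp] at hzy
      rcases hzy with rfl | rfl
      exacts [absurd rfl hne, by simp]
    · rw [← mem_neighborSet, hq] at hzy
      rcases hzy with rfl | rfl
      exacts [absurd rfl hne, by simp]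

/-- The vertices of `S` within distance two of `x` lie in the closed neighbourhood of `h`, which also
contains `x` and `o`. -/
theorem ncard_square_neighborSet_inter_add_one_le {S : Set V} {x h m o : V}
    (hfin : (G.neighborSet h).Finite) (hx : G.neighborSet x = {h, m}) (hm : m ∉ S)
    (hmS : Disjoint (G.neighborSet m) S) (hxS : x ∉ S) (ho : G.Adj h o) (hoS : o ∉ S)
    (hxo : x ≠ o) : (G.square.neighborSet x ∩ S).ncard + 1 ≤ (G.neighborSet h).ncard := by
  have hxh : G.Adj h x := (show h ∈ G.neighborSet x from hx ▸ Set.mem_insert _ _).symm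
  refine Set.ncard_add_one_le_of_subset_insert_inter (h := h) hfin ?_ hxh ho hxo hxS hoS
  rintro y ⟨⟨-, hxy | ⟨z, hxz, hzy⟩⟩, hyS⟩
  · rw [← mem_neighborSet, hx] at hxy
    rcases hxy with rfl | rfl
    exacts [⟨Set.mem_insert _ _, hyS⟩, absurd hyS hm]
  · rw [← mem_neighborSet, hx] at hxz
    rcases hxz with rfl | rfl
    exacts [⟨Set.mem_insert_of_mem _ hzy, hyS⟩, absurd hyS (Set.disjoint_left.1 hmS hzy)]

theorem square_induce_le_induce_square {S : Set V}
    (hS : ∀ z ∉ S, (G.neighborSet z ∩ S).Subsingleton) :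
    G.square.induce S ≤ (G.induce S).square := by
  rintro ⟨x, hx⟩ ⟨y, hy⟩ ⟨hne, hxy | ⟨z, hxz, hzy⟩⟩
  · exact ⟨by simpa using hne, Or.inl hxy⟩
  · by_cases hz : z ∈ S
    · exact ⟨by simpa using hne, Or.inr ⟨⟨z, hz⟩, hxz, hzy⟩⟩
    · exact absurd (hS z hz ⟨hxz.symm, hx⟩ ⟨hzy, hy⟩) hne

theorem Choosable.anti {H H' : SimpleGraph V} {m : ℕ} (h : H'.Choosable m)
    (hle : H ≤ H') : H.Choosable m := fun L hL =>
  let ⟨c, hcL, hc⟩ := h L hL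
  ⟨c, hcL, fun _ _ hxy => hc (hle hxy)⟩

theorem Choosable.exists_isListColoringOn {H : SimpleGraph V} {S : Set V} {m : ℕ}
    (h : (H.induce S).Choosable m) (L : V → Finset ℕ) (hL : ∀ x, m ≤ (L x).card) :
    ∃ c, H.IsListColoringOn L S c := by
  obtain ⟨c₀, hc₀L, hc₀⟩ := h (fun x => L x) fun x => hL x
  classical
  refine ⟨fun x => if hx : x ∈ S then c₀ ⟨x, hx⟩ else 0, fun x hx => by simpa [hx] using hc₀L ⟨x, hx⟩,
    fun x hx y hy hxy => ?_⟩
  simpa [hx, hy] using hc₀ (show (H.induce S).Adj ⟨x, hx⟩ ⟨y, hy⟩ by simpa using hxy)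

end Square

/-- A cycle `a 0, b 0, a 1, b 1, …, a (n-1), b (n-1)` of `G` on which every vertex has degree two
except the hubs among the `b t`; hubs and non-hubs alternate. -/
structure HubCycle (G : SimpleGraph V) (n : ℕ) where
  a : ZMod n → V
  b : ZMod n → V
  IsHub : ZMod n → Prop
  injective_a : Injective a
  injective_b : Injective b
  a_ne_b : ∀ s t, a s ≠ b t
  adj_a_b : ∀ t, G.Adj (a t) (b t)
  adj_b_a : ∀ t, G.Adj (b t) (a (t + 1))
  isHub_add_one : ∀ t, IsHub (t + 1) ↔ ¬ IsHub t
  ncard_a : ∀ t, (G.neighborSet (a t)).ncard = 2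
  ncard_b : ∀ t, ¬ IsHub t → (G.neighborSet (b t)).ncard = 2

namespace HubCycle

section

variable {G : SimpleGraph V} {n : ℕ} (C : G.HubCycle n)

def deleted : Set V := Set.range C.a ∪ C.b '' {t | ¬ C.IsHub t}

theorem a_mem_deleted (t : ZMod n) : C.a t ∈ C.deleted := Or.inl ⟨t, rfl⟩

theorem b_mem_deleted {t : ZMod n} (ht : ¬ C.IsHub t) : C.b t ∈ C.deleted := Or.inr ⟨t, ht, rfl⟩

theorem compl_deleted_union_union : C.deletedᶜ ∪ Set.range C.a ∪ C.b '' {t | ¬ C.IsHub t} =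
    Set.univ := by
  rw [Set.union_assoc]
  exact Set.compl_union_self _

protected theorem ne_add_one (C : G.HubCycle n) (t : ZMod n) : t ≠ t + 1 := fun h => by
  simpa [← h] using C.isHub_add_one t

theorem isHub_sub_one (t : ZMod n) : C.IsHub (t - 1) ↔ ¬ C.IsHub t := by
  have := C.isHub_add_one (t - 1)
  rw [sub_add_cancel] at this
  tauto

theorem neighborSet_a (t : ZMod n) : G.neighborSet (C.a t) = {C.b (t - 1), C.b t} :=
  neighborSet_eq_pair (by simpa using (C.adj_b_a (t - 1)).symm) (C.adj_a_b t)
    (C.injective_b.ne (by simpa using C.ne_add_one (t - 1))) (C.ncard_a t)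

theorem neighborSet_b {t : ZMod n} (ht : ¬ C.IsHub t) :
    G.neighborSet (C.b t) = {C.a t, C.a (t + 1)} :=
  neighborSet_eq_pair (C.adj_a_b t).symm (C.adj_b_a t)
    (C.injective_a.ne (C.ne_add_one t)) (C.ncard_b t ht)

theorem square_adj_a_a {s t : ZMod n} (h : G.square.Adj (C.a s) (C.a t)) :
    t = s + 1 ∨ s = t + 1 := by
  obtain ⟨hne, hst | ⟨z, hsz, hzt⟩⟩ := h
  · rw [← mem_neighborSet, C.neighborSet_a] at hst
    rcases hst with h | h <;> exact absurd h (C.a_ne_b _ _)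
  · rw [← mem_neighborSet, C.neighborSet_a] at hsz
    replace hzt : z ∈ G.neighborSet (C.a t) := hzt.symm
    rw [C.neighborSet_a] at hzt
    rcases hsz with rfl | rfl <;> rcases hzt with h | h <;> replace h := C.injective_b h
    · exact absurd (by rw [sub_left_inj.1 h]) hne
    · exact Or.inr (by linear_combination h)
    · exact Or.inl (by linear_combination -h)
    · exact absurd (by rw [h]) hne

theorem not_square_adj_b_b {s t : ZMod n} (hs : ¬ C.IsHub s) (ht : ¬ C.IsHub t) :
    ¬ G.square.Adj (C.b s) (C.b t) := by
  rintro ⟨hne, hst | ⟨z, hsz, hzt⟩⟩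
  · rw [← mem_neighborSet, C.neighborSet_b hs] at hst
    rcases hst with h | h <;> exact C.a_ne_b _ _ h.symm
  · rw [← mem_neighborSet, C.neighborSet_b hs] at hsz
    replace hzt : z ∈ G.neighborSet (C.b t) := hzt.symm
    rw [C.neighborSet_b ht] at hzt
    rcases hsz with rfl | rfl <;> rcases hzt with h | h <;> replace h := C.injective_a h
    · exact hne (by rw [h])
    · subst h
      exact hs ((C.isHub_add_one t).2 ht)
    · subst h
      exact ht ((C.isHub_add_one s).2 hs)
    · exact hne (by rw [add_left_injective 1 h])

theorem subsingleton_neighborSet_inter_compl_deleted {z : V} (hz : z ∈ C.deleted) :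
    (G.neighborSet z ∩ C.deletedᶜ).Subsingleton := by
  rcases hz with ⟨t, rfl⟩ | ⟨t, ht, rfl⟩
  · rw [C.neighborSet_a]
    by_cases ht : C.IsHub t
    · refine (Set.subsingleton_singleton (a := C.b t)).anti ?_
      rintro x ⟨rfl | rfl, hx⟩
      exacts [absurd (C.b_mem_deleted fun h => (C.isHub_sub_one t).1 h ht) hx, rfl]
    · refine (Set.subsingleton_singleton (a := C.b (t - 1))).anti ?_
      rintro x ⟨rfl | rfl, hx⟩
      exacts [rfl, absurd (C.b_mem_deleted ht) hx]
  · rw [C.neighborSet_b ht]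
    refine Set.subsingleton_empty.anti ?_
    rintro x ⟨rfl | rfl, hx⟩ <;> exact hx (C.a_mem_deleted _)

theorem ncard_square_neighborSet_a_inter_add_one_le [Finite V] {k : ℕ}
    (hdeg : ∀ t, C.IsHub t → (G.neighborSet (C.b t)).ncard ≤ k) (t : ZMod n) :
    (G.square.neighborSet (C.a t) ∩ C.deletedᶜ).ncard + 1 ≤ k := by
  have hdisj : ∀ s, ¬ C.IsHub s → Disjoint (G.neighborSet (C.b s)) C.deletedᶜ := fun s hs => by
    rw [C.neighborSet_b hs, Set.disjoint_compl_right_iff_subset]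
    exact Set.pair_subset (C.a_mem_deleted _) (C.a_mem_deleted _)
  have hat : C.a t ∉ C.deletedᶜ := Set.notMem_compl_iff.2 (C.a_mem_deleted t)
  by_cases ht : C.IsHub t
  · have hmid : ¬ C.IsHub (t - 1) := fun h => (C.isHub_sub_one t).1 h ht
    refine (ncard_square_neighborSet_inter_add_one_le (Set.toFinite _)
      (by rw [C.neighborSet_a, Set.pair_comm]) (Set.notMem_compl_iff.2 (C.b_mem_deleted hmid))
      (hdisj _ hmid) hat (C.adj_b_a t) (Set.notMem_compl_iff.2 (C.a_mem_deleted _))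
      (C.injective_a.ne (C.ne_add_one t))).trans (hdeg t ht)
  · refine (ncard_square_neighborSet_inter_add_one_le (Set.toFinite _) (C.neighborSet_a t)
      (Set.notMem_compl_iff.2 (C.b_mem_deleted ht)) (hdisj _ ht) hat (C.adj_a_b (t - 1)).symm
      (Set.notMem_compl_iff.2 (C.a_mem_deleted _))
      (C.injective_a.ne (by simpa using (C.ne_add_one (t - 1)).symm))).trans
      (hdeg _ ((C.isHub_sub_one t).2 ht))

theorem ncard_square_neighborSet_b_le [Finite V] {t : ZMod n} (ht : ¬ C.IsHub t) :
    (G.square.neighborSet (C.b t)).ncard ≤ 4 := by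
  refine (Set.ncard_le_ncard (square_neighborSet_subset (C.neighborSet_b ht)
    (by rw [C.neighborSet_a, Set.pair_comm]) (by rw [C.neighborSet_a, add_sub_cancel_right]))).trans ?_
  have := Set.ncard_insert_le (C.a t) {C.a (t + 1), C.b (t - 1), C.b (t + 1)}
  have := Set.ncard_insert_le (C.a (t + 1)) {C.b (t - 1), C.b (t + 1)}
  have := Set.ncard_insert_le (C.b (t - 1)) {C.b (t + 1)}
  rw [Set.ncard_singleton] at this
  omega

theorem square_choosable [Finite V] [NeZero n] {k : ℕ} (hk : 4 ≤ k)
    (hdeg : ∀ t, C.IsHub t → (G.neighborSet (C.b t)).ncard ≤ k)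
    (hred : (G.induce C.deletedᶜ).square.Choosable (k + 1)) : G.square.Choosable (k + 1) := by
  intro L hL
  obtain ⟨c₀, hc₀⟩ := (hred.anti (square_induce_le_induce_square fun z hz =>
    C.subsingleton_neighborSet_inter_compl_deleted (Set.notMem_compl_iff.1 hz))).exists_isListColoringOn L hL
  obtain ⟨c₁, hc₁⟩ := hc₀.exists_extend_of_cycle C.isHub_add_one C.injective_a
    (fun _ _ => C.square_adj_a_a)
    fun t => by have := C.ncard_square_neighborSet_a_inter_add_one_le hdeg t; have := hL (C.a t); omega
  obtain ⟨c₂, hc₂⟩ := hc₁.exists_extend_of_independent (B := C.b '' {t | ¬ C.IsHub t})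
    (by rintro _ ⟨s, hs, rfl⟩ _ ⟨t, ht, rfl⟩; exact C.not_square_adj_b_b hs ht)
    (by
      rintro _ ⟨t, ht, rfl⟩
      have := (Set.ncard_inter_le_ncard_left (G.square.neighborSet (C.b t))
        (C.deletedᶜ ∪ Set.range C.a)).trans (C.ncard_square_neighborSet_b_le ht)
      have := hL (C.b t)
      omega)
  rw [C.compl_deleted_union_union] at hc₂
  exact ⟨c₂, fun x => hc₂.1 x trivial, fun x y h => hc₂.2 x trivial y trivial h⟩

end

section OfNat

variable {G : SimpleGraph V} {l : ℕ} [NeZero l] {v : ℕ → V}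

def ofNat (hinj : Set.InjOn v (Set.Icc 1 (4 * l)))
    (hadj : ∀ j, 1 ≤ j → j < 4 * l → G.Adj (v j) (v (j + 1))) (hclose : G.Adj (v (4 * l)) (v 1))
    (hdeg2 : ∀ j, 1 ≤ j → j ≤ 4 * l → ¬ 4 ∣ j → (G.neighborSet (v j)).ncard = 2) :
    G.HubCycle (2 * l) where
  a t := v (2 * t.val + 1)
  b t := v (2 * t.val + 2)
  IsHub t := 4 ∣ 2 * t.val + 2
  injective_a s t h := by
    have := ZMod.val_lt s
    have := ZMod.val_lt t
    have := hinj ⟨by omega, by omega⟩ ⟨by omega, by omega⟩ h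
    exact ZMod.val_injective _ (by omega)
  injective_b s t h := by
    have := ZMod.val_lt s
    have := ZMod.val_lt t
    have := hinj ⟨by omega, by omega⟩ ⟨by omega, by omega⟩ h
    exact ZMod.val_injective _ (by omega)
  a_ne_b s t h := by
    have := ZMod.val_lt s
    have := ZMod.val_lt t
    have := hinj ⟨by omega, by omega⟩ ⟨by omega, by omega⟩ h
    omega
  adj_a_b t := hadj _ (by omega) (by have := ZMod.val_lt t; omega)
  adj_b_a t := by
    rcases ZMod.val_add_one_eq_or t with h | ⟨h, h'⟩
    · have := ZMod.val_lt (t + 1)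
      rw [h]
      exact hadj _ (by omega) (by omega)
    · rw [h, show 2 * t.val + 2 = 4 * l by omega]
      exact hclose
  isHub_add_one t := by
    rcases ZMod.val_add_one_eq_or t with h | ⟨h, h'⟩ <;> rw [h] <;> omega
  ncard_a t := hdeg2 _ (by omega) (by have := ZMod.val_lt t; omega) (by omega)
  ncard_b t ht := hdeg2 _ (by omega) (by have := ZMod.val_lt t; omega) ht

theorem compl_deleted_ofNat (hinj : Set.InjOn v (Set.Icc 1 (4 * l)))
    (hadj : ∀ j, 1 ≤ j → j < 4 * l → G.Adj (v j) (v (j + 1))) (hclose : G.Adj (v (4 * l)) (v 1))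
    (hdeg2 : ∀ j, 1 ≤ j → j ≤ 4 * l → ¬ 4 ∣ j → (G.neighborSet (v j)).ncard = 2) :
    (ofNat hinj hadj hclose hdeg2).deletedᶜ = {x | ∀ j, 1 ≤ j → j ≤ 4 * l → ¬ 4 ∣ j → x ≠ v j} := by
  ext x
  simp only [Set.mem_compl_iff]
  constructor
  · rintro hx j hj₁ hj₂ hj₄ rfl
    apply hx
    rcases Nat.even_or_odd' j with ⟨q, rfl | rfl⟩
    · have hq : (q - 1 : ℕ) < 2 * l := by omega
      refine Or.inr ⟨((q - 1 : ℕ) : ZMod (2 * l)), ?_, ?_⟩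
      · show ¬ 4 ∣ 2 * (((q - 1 : ℕ) : ZMod (2 * l))).val + 2
        rw [ZMod.val_cast_of_lt hq]
        omega
      · show v (2 * (((q - 1 : ℕ) : ZMod (2 * l))).val + 2) = v (2 * q)
        rw [ZMod.val_cast_of_lt hq, show 2 * (q - 1) + 2 = 2 * q by omega]
    · refine Or.inl ⟨(q : ZMod (2 * l)), ?_⟩
      show v (2 * ((q : ZMod (2 * l))).val + 1) = v (2 * q + 1)
      rw [ZMod.val_cast_of_lt (by omega)]
  · rintro hx (⟨t, rfl⟩ | ⟨t, ht, rfl⟩)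
    · exact hx (2 * t.val + 1) (by omega) (by have := ZMod.val_lt t; omega) (by omega) rfl
    · exact hx (2 * t.val + 2) (by omega) (by have := ZMod.val_lt t; omega) ht rfl

end OfNat

end HubCycle

end SimpleGraph

theorem config_C4_reducible_general {V : Type*} [Fintype V] (k l : ℕ) (hk : 5 ≤ k) (hl : 1 ≤ l)
    (G : SimpleGraph V)
    (v : ℕ → V) (hinj : Set.InjOn v (Set.Icc 1 (4 * l)))
    (hadj : ∀ j, 1 ≤ j → j < 4 * l → G.Adj (v j) (v (j + 1)))
    (hclose : G.Adj (v (4 * l)) (v 1))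
    (hdegdvd : ∀ j, 1 ≤ j → j ≤ 4 * l → 4 ∣ j → (G.neighborSet (v j)).ncard ≤ k)
    (hdeg2 : ∀ j, 1 ≤ j → j ≤ 4 * l → ¬ 4 ∣ j → (G.neighborSet (v j)).ncard = 2)
    (hred : ((G.induce {x | ∀ j, 1 ≤ j → j ≤ 4 * l → ¬ 4 ∣ j → x ≠ v j}).square.Choosable
      (k + 1))) :
    G.square.Choosable (k + 1) := by
  have : NeZero l := ⟨by omega⟩
  rw [← HubCycle.compl_deleted_ofNat hinj hadj hclose hdeg2] at hred
  exact (HubCycle.ofNat hinj hadj hclose hdeg2).square_choosable (by omega)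
    (fun t ht => hdegdvd _ (by omega) (by have := ZMod.val_lt t; omega) ht) hred

/-- (C4): a `4ℓ`-cycle `v₁v₂…v₄ℓ` with `d(vᵢ) ≤ k` when `4 ∣ i` and `d(vᵢ) = 2`
otherwise is `(k+1)`-reducible, for `k ≥ 5`. -/
theorem config_C4_reducible {V : Type*} [Fintype V] (k l : ℕ) (hk : 5 ≤ k) (hl : 1 ≤ l)
    (G : SimpleGraph V) (hΔ : ∀ z, (G.neighborSet z).ncard ≤ k)
    (v : ℕ → V) (hinj : Set.InjOn v (Set.Icc 1 (4 * l)))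
    (hadj : ∀ j, 1 ≤ j → j < 4 * l → G.Adj (v j) (v (j + 1)))
    (hclose : G.Adj (v (4 * l)) (v 1))
    (hdegdvd : ∀ j, 1 ≤ j → j ≤ 4 * l → 4 ∣ j → (G.neighborSet (v j)).ncard ≤ k)
    (hdeg2 : ∀ j, 1 ≤ j → j ≤ 4 * l → ¬ 4 ∣ j → (G.neighborSet (v j)).ncard = 2)
    (hred : ((G.induce {x | ∀ j, 1 ≤ j → j ≤ 4 * l → ¬ 4 ∣ j → x ≠ v j}).square.Choosable
      (k + 1))) :
    G.square.Choosable (k + 1) :=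
  config_C4_reducible_general k l hk hl G v hinj hadj hclose hdegdvd hdeg2 hred
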